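/- Fix a > 0, β > 0, σ > 0, T > 0. Let Y : [0, T] × Ω → ℝ be a stochastic process with Y(0) = 0 a.s., independent increments, and such that for all 0 ≤ s < t ≤ T the increment Y(t) − Y(s) has the law of σ Z √W with Z standard normal independent of W ~ Gamma(a(t − s), β). For each k ≥ 1 let π_k = (0 = t₀^{(k)} < ⋯ < t_{ℓ(k)}^{(k)} = T) be a partition of [0, T] with mesh tending to 0 as k → ∞, and let V_Q(T, π_k) = Σ_{j=0}^{ℓ(k)−1} (Y(t_{j+1}^{(k)}) − Y(t_j^{(k)}))². Then for every constant c ∈ ℝ, liminf_{k → ∞} E[(V_Q(T, π_k) − c)²] ≥ 3 a σ⁴ T / β² > 0; in particular V_Q(T, π_k) does not converge in L² to any constant. -/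

import Mathlib

/-!
Write `V = ∑ⱼ Xⱼ²` with independent increments `Xⱼ ∼ σ Z √Wⱼ`, `Wⱼ ∼ Gamma(sⱼ, β)`,
`sⱼ = a (tⱼ₊₁ - tⱼ)`. The moments `E Z² = 1`, `E Z⁴ = 3` (derivatives of the moment generating
function `exp (t² / 2)`) and `E W = s / β`, `E W² = s (s + 1) / β²` give
`Var (Xⱼ²) = σ⁴ sⱼ (2 sⱼ + 3) / β² ≥ 3 σ⁴ sⱼ / β²`. Since `∑ⱼ sⱼ = a T`, every partition, however
fine, has `E (V - c)² ≥ Var V ≥ 3 a σ⁴ T / β²`.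
-/

open MeasureTheory ProbabilityTheory Real Filter

/-- The centered gamma-gh increment law of parameter `(s, β, σ)`: the law of `σ Z √W`
with `Z` standard normal independent of `W ~ Gamma(s, β)`. -/
noncomputable def centeredGammaGH (s β σ : ℝ) : Measure ℝ :=
  Measure.map (fun p : ℝ × ℝ => σ * p.1 * Real.sqrt p.2)
    ((gaussianReal 0 1).prod (gammaMeasure s β))

open scoped NNReal

section GaussianMoments

lemma integral_pow_gaussianReal_zero (v : ℝ≥0) (n : ℕ) :
    ∫ x, x ^ n ∂gaussianReal 0 v = iteratedDeriv n (fun t ↦ rexp (v * t ^ 2 / 2)) 0 := by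
  simpa [mgf_id_gaussianReal] using
    (iteratedDeriv_mgf_zero (X := id) (μ := gaussianReal 0 v) (by simp) n).symm

lemma integral_sq_gaussianReal_zero (v : ℝ≥0) : ∫ x, x ^ 2 ∂gaussianReal 0 v = v := by
  rw [← variance_fun_id_gaussianReal (μ := 0) (v := v),
    variance_of_integral_eq_zero (by fun_prop) (by simp)]

lemma hasDerivAt_mul_exp_mul_sq_div_two {f : ℝ → ℝ} {f' t : ℝ} (v : ℝ) (hf : HasDerivAt f f' t) :
    HasDerivAt (fun t ↦ f t * rexp (v * t ^ 2 / 2))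
      ((f' + v * t * f t) * rexp (v * t ^ 2 / 2)) t :=
  (hf.fun_mul (((hasDerivAt_pow 2 t).const_mul v).div_const 2).exp).congr_deriv (by ring)

lemma integral_pow_four_gaussianReal_zero (v : ℝ≥0) :
    ∫ x, x ^ 4 ∂gaussianReal 0 v = 3 * v ^ 2 := by
  set e : ℝ → ℝ := fun t ↦ rexp (v * t ^ 2 / 2)
  have deriv_mul_e : ∀ p p' : ℝ → ℝ, (∀ t, HasDerivAt p (p' t) t) →
      deriv (fun t ↦ p t * e t) = fun t ↦ (p' t + v * t * p t) * e t := fun p p' hp ↦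
    funext fun t ↦ (hasDerivAt_mul_exp_mul_sq_div_two v (hp t)).deriv
  have d1 : deriv e = fun t ↦ v * t * e t := by
    simpa using deriv_mul_e (fun _ ↦ 1) (fun _ ↦ 0) (fun t ↦ hasDerivAt_const t 1)
  have d2 : deriv (fun t ↦ v * t * e t) = fun t ↦ (v + v ^ 2 * t ^ 2) * e t := by
    rw [deriv_mul_e _ (fun _ ↦ (v : ℝ)) fun t ↦ by simpa using (hasDerivAt_id t).const_mul (v : ℝ)]
    ext t; ring
  have d3 : deriv (fun t ↦ (v + v ^ 2 * t ^ 2) * e t) =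
      fun t ↦ (3 * v ^ 2 * t + v ^ 3 * t ^ 3) * e t := by
    rw [deriv_mul_e _ (fun t ↦ 2 * v ^ 2 * t) fun t ↦
      (((hasDerivAt_pow 2 t).const_mul ((v : ℝ) ^ 2)).const_add (v : ℝ)).congr_deriv (by ring)]
    ext t; ring
  have d4 : deriv (fun t ↦ (3 * v ^ 2 * t + v ^ 3 * t ^ 3) * e t) =
      fun t ↦ (3 * v ^ 2 + 6 * v ^ 3 * t ^ 2 + v ^ 4 * t ^ 4) * e t := by
    rw [deriv_mul_e _ (fun t ↦ 3 * v ^ 2 + 3 * v ^ 3 * t ^ 2) fun t ↦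
      (((hasDerivAt_id' t).const_mul (3 * (v : ℝ) ^ 2)).fun_add
        ((hasDerivAt_pow 3 t).const_mul ((v : ℝ) ^ 3))).congr_deriv (by simp; ring)]
    ext t; ring
  rw [integral_pow_gaussianReal_zero, iteratedDeriv_succ', iteratedDeriv_succ',
    iteratedDeriv_succ', iteratedDeriv_succ', d1, d2, d3, d4]
  simp [e]

end GaussianMoments

section GammaMoments

instance (s β : ℝ) : SFinite (gammaMeasure s β) := by
  unfold gammaMeasure; infer_instance

lemma ae_nonneg_gammaMeasure (s β : ℝ) : ∀ᵐ x ∂gammaMeasure s β, 0 ≤ x :=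
  (ae_withDensity_iff (measurable_gammaPDFReal s β).ennreal_ofReal).2 <|
    ae_of_all _ fun _ hx ↦ not_lt.1 fun h ↦ hx (gammaPDF_of_neg h)

variable {s β : ℝ}

lemma integral_gammaMeasure (hs : 0 < s) (hβ : 0 < β) (g : ℝ → ℝ) :
    ∫ x, g x ∂gammaMeasure s β = ∫ x, gammaPDFReal s β x * g x := by
  rw [gammaMeasure, integral_withDensity_eq_integral_toReal_smul (f := gammaPDF s β)
    (measurable_gammaPDFReal s β).ennreal_ofReal (ae_of_all _ fun _ ↦ ENNReal.ofReal_lt_top)]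
  simp [gammaPDF, ENNReal.toReal_ofReal (gammaPDFReal_nonneg hs hβ _)]

lemma integrable_gammaMeasure_iff (hs : 0 < s) (hβ : 0 < β) {g : ℝ → ℝ} :
    Integrable g (gammaMeasure s β) ↔ Integrable fun x ↦ gammaPDFReal s β x * g x := by
  rw [gammaMeasure, integrable_withDensity_iff_integrable_smul' (f := gammaPDF s β)
    (measurable_gammaPDFReal s β).ennreal_ofReal (ae_of_all _ fun _ ↦ ENNReal.ofReal_lt_top)]
  simp [gammaPDF, ENNReal.toReal_ofReal (gammaPDFReal_nonneg hs hβ _)]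

lemma gammaPDFReal_mul_pow (hs : 0 < s) (hβ : 0 < β) (n : ℕ) (x : ℝ) :
    gammaPDFReal s β x * x ^ n =
      Gamma (s + n) / (Gamma s * β ^ n) * gammaPDFReal (s + n) β x := by
  rcases n.eq_zero_or_pos with rfl | hn
  · simp [(Gamma_pos_of_pos hs).ne']
  unfold gammaPDFReal
  rcases lt_trichotomy x 0 with hx | rfl | hx
  · simp [hx.not_ge]
  · have hexp : s + n - 1 ≠ 0 := by linarith [show (1 : ℝ) ≤ n from Nat.one_le_cast.mpr hn]
    simp [zero_pow hn.ne', zero_rpow hexp]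
  · simp only [if_pos hx.le]
    rw [rpow_add hβ, show s + n - 1 = (s - 1) + n by ring, rpow_add hx, rpow_natCast,
      rpow_natCast]
    field_simp

lemma integrable_pow_gammaMeasure (hs : 0 < s) (hβ : 0 < β) (n : ℕ) :
    Integrable (fun x ↦ x ^ n) (gammaMeasure s β) := by
  have : IsProbabilityMeasure (gammaMeasure (s + n) β) :=
    isProbabilityMeasure_gammaMeasure (by positivity) hβ
  have hpdf := (integrable_gammaMeasure_iff (s := s + n) (by positivity) hβ).1
    (integrable_const (1 : ℝ))
  simp_rw [integrable_gammaMeasure_iff hs hβ, gammaPDFReal_mul_pow hs hβ]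
  simpa using hpdf.const_mul _

lemma integral_pow_gammaMeasure (hs : 0 < s) (hβ : 0 < β) (n : ℕ) :
    ∫ x, x ^ n ∂gammaMeasure s β = Gamma (s + n) / (Gamma s * β ^ n) := by
  have : IsProbabilityMeasure (gammaMeasure (s + n) β) :=
    isProbabilityMeasure_gammaMeasure (by positivity) hβ
  have hpdf := integral_gammaMeasure (s := s + n) (by positivity) hβ fun _ ↦ 1
  simp only [integral_const, probReal_univ, smul_eq_mul, mul_one] at hpdf
  simp_rw [integral_gammaMeasure hs hβ, gammaPDFReal_mul_pow hs hβ, integral_const_mul, ← hpdf,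
    mul_one]

end GammaMoments

section CenteredGammaGH

variable {s β σ : ℝ}

lemma isProbabilityMeasure_centeredGammaGH (hs : 0 < s) (hβ : 0 < β) :
    IsProbabilityMeasure (centeredGammaGH s β σ) := by
  have := isProbabilityMeasure_gammaMeasure hs hβ
  exact Measure.isProbabilityMeasure_map (by fun_prop)

lemma pow_two_mul_ae_eq_prod_gaussianReal_gammaMeasure (s β σ : ℝ) (n : ℕ) :
    (fun p : ℝ × ℝ ↦ (σ * p.1 * √p.2) ^ (2 * n)) =ᵐ[(gaussianReal 0 1).prod (gammaMeasure s β)]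
      fun p ↦ σ ^ (2 * n) * (p.1 ^ (2 * n) * p.2 ^ n) := by
  have hW : ∀ᵐ p ∂(gaussianReal 0 1).prod (gammaMeasure s β), 0 ≤ p.2 :=
    ae_of_ae_map measurable_snd.aemeasurable (by simpa using ae_nonneg_gammaMeasure s β)
  filter_upwards [hW] with p hp
  rw [mul_pow, mul_pow, pow_mul √p.2, sq_sqrt hp]
  ring

lemma integral_pow_two_mul_centeredGammaGH (s β σ : ℝ) (n : ℕ) :
    ∫ x, x ^ (2 * n) ∂centeredGammaGH s β σ =
      σ ^ (2 * n) * ((∫ z, z ^ (2 * n) ∂gaussianReal 0 1) * ∫ w, w ^ n ∂gammaMeasure s β) := by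
  rw [centeredGammaGH, integral_map (by fun_prop) (by fun_prop),
    integral_congr_ae (pow_two_mul_ae_eq_prod_gaussianReal_gammaMeasure s β σ n),
    integral_const_mul, integral_prod_mul (fun z ↦ z ^ (2 * n)) (fun w ↦ w ^ n)]

lemma integrable_pow_two_mul_centeredGammaGH (hs : 0 < s) (hβ : 0 < β) (n : ℕ) :
    Integrable (fun x ↦ x ^ (2 * n)) (centeredGammaGH s β σ) := by
  rw [centeredGammaGH, integrable_map_measure (by fun_prop) (by fun_prop)]
  have hZ : Integrable (fun z : ℝ ↦ z ^ (2 * n)) (gaussianReal 0 1) := by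
    simpa [pow_mul, ← sq_abs] using
      (memLp_id_gaussianReal (μ := 0) (v := 1) (2 * n : ℕ)).integrable_norm_pow'
  exact ((hZ.mul_prod (integrable_pow_gammaMeasure hs hβ n)).const_mul (σ ^ (2 * n))).congr
    (pow_two_mul_ae_eq_prod_gaussianReal_gammaMeasure s β σ n).symm

lemma integral_sq_centeredGammaGH (hs : 0 < s) (hβ : 0 < β) :
    ∫ x, x ^ 2 ∂centeredGammaGH s β σ = σ ^ 2 * s / β := by
  have hmoment := integral_pow_two_mul_centeredGammaGH s β σ 1
  simp only [Nat.reduceMul, integral_pow_gammaMeasure hs hβ, integral_sq_gaussianReal_zero,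
    NNReal.coe_one, Nat.cast_one, Gamma_add_one hs.ne'] at hmoment
  rw [hmoment]
  field_simp [(Gamma_pos_of_pos hs).ne']

lemma integral_pow_four_centeredGammaGH (hs : 0 < s) (hβ : 0 < β) :
    ∫ x, x ^ 4 ∂centeredGammaGH s β σ = 3 * σ ^ 4 * s * (s + 1) / β ^ 2 := by
  have hmoment := integral_pow_two_mul_centeredGammaGH s β σ 2
  simp only [Nat.reduceMul, integral_pow_gammaMeasure hs hβ, integral_pow_four_gaussianReal_zero,
    NNReal.coe_one, show s + ((2 : ℕ) : ℝ) = s + 1 + 1 by push_cast; ring,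
    Gamma_add_one (by positivity : s + 1 ≠ 0), Gamma_add_one hs.ne'] at hmoment
  rw [hmoment]
  field_simp [(Gamma_pos_of_pos hs).ne']

lemma memLp_sq_centeredGammaGH (hs : 0 < s) (hβ : 0 < β) :
    MemLp (fun x ↦ x ^ 2) 2 (centeredGammaGH s β σ) :=
  (memLp_two_iff_integrable_sq (by fun_prop)).2 <| by
    simpa [← pow_mul] using integrable_pow_two_mul_centeredGammaGH (σ := σ) hs hβ 2

lemma variance_sq_centeredGammaGH (hs : 0 < s) (hβ : 0 < β) :
    Var[fun x ↦ x ^ 2; centeredGammaGH s β σ] = σ ^ 4 * s * (2 * s + 3) / β ^ 2 := by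
  have := isProbabilityMeasure_centeredGammaGH (σ := σ) hs hβ
  rw [variance_eq_sub (memLp_sq_centeredGammaGH hs hβ)]
  simp only [Pi.pow_apply, ← pow_mul, integral_pow_four_centeredGammaGH hs hβ,
    integral_sq_centeredGammaGH hs hβ]
  field_simp
  ring

end CenteredGammaGH

section SumOfSquares

variable {Ω : Type*} [MeasurableSpace Ω] {P : Measure Ω} [IsProbabilityMeasure P]

lemma integral_sub_sq_eq_variance_add {X : Ω → ℝ} (hX : MemLp X 2 P) (c : ℝ) :
    ∫ ω, (X ω - c) ^ 2 ∂P = Var[X; P] + (P[X] - c) ^ 2 := by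
  have hXc : MemLp (fun ω ↦ X ω - c) 2 P := hX.sub (memLp_const c)
  rw [← variance_sub_const hX.aestronglyMeasurable c, variance_eq_sub hXc,
    integral_sub (hX.integrable one_le_two) (integrable_const c)]
  simp

lemma integral_sum_sq_sub_sq_of_iIndepFun {ι : Type*} [Fintype ι] {X : ι → Ω → ℝ}
    (hXm : ∀ j, Measurable (X j)) (hindep : iIndepFun X P) {s : ι → ℝ} (hs : ∀ j, 0 < s j)
    {β σ : ℝ} (hβ : 0 < β) (hlaw : ∀ j, P.map (X j) = centeredGammaGH (s j) β σ) (c : ℝ) :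
    ∫ ω, (∑ j, X j ω ^ 2 - c) ^ 2 ∂P =
      σ ^ 4 / β ^ 2 * ∑ j, s j * (2 * s j + 3) + (σ ^ 2 / β * ∑ j, s j - c) ^ 2 := by
  have hmemLp : ∀ j, MemLp (fun ω ↦ X j ω ^ 2) 2 P := fun j ↦
    (memLp_map_measure_iff (g := fun x ↦ x ^ 2) (by fun_prop) (hXm j).aemeasurable).1
      (hlaw j ▸ memLp_sq_centeredGammaGH (hs j) hβ)
  have hvar : ∀ j, Var[fun ω ↦ X j ω ^ 2; P] = σ ^ 4 * s j * (2 * s j + 3) / β ^ 2 := fun j ↦ by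
    rw [← variance_sq_centeredGammaGH (hs j) hβ, ← hlaw j,
      variance_map (by fun_prop) (hXm j).aemeasurable]
    rfl
  have hmean : ∀ j, ∫ ω, X j ω ^ 2 ∂P = σ ^ 2 * s j / β := fun j ↦ by
    rw [← integral_sq_centeredGammaGH (hs j) hβ, ← hlaw j,
      integral_map (hXm j).aemeasurable (by fun_prop)]
  have hindep_sq := hindep.comp (fun _ x ↦ x ^ 2) (fun _ ↦ by fun_prop)
  have hdecomp :=
    integral_sub_sq_eq_variance_add (memLp_finsetSum' Finset.univ fun j _ ↦ hmemLp j) c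
  simp only [Finset.sum_apply] at hdecomp
  rw [hdecomp, IndepFun.variance_sum (fun j _ ↦ hmemLp j) fun i _ j _ hij ↦ hindep_sq.indepFun hij,
    integral_finsetSum _ fun j _ ↦ (hmemLp j).integrable one_le_two]
  simp only [hvar, hmean, Finset.mul_sum, div_mul_eq_mul_div, mul_assoc]

end SumOfSquares

lemma sum_mul_two_mul_add_three_mem_Icc {ι : Type*} (s : Finset ι) {x : ι → ℝ}
    (hx : ∀ j ∈ s, 0 ≤ x j) :
    ∑ j ∈ s, x j * (2 * x j + 3) ∈
      Set.Icc (3 * ∑ j ∈ s, x j) ((∑ j ∈ s, x j) * (2 * ∑ j ∈ s, x j + 3)) := by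
  have hexpand : ∑ j ∈ s, x j * (2 * x j + 3) = 2 * ∑ j ∈ s, x j ^ 2 + 3 * ∑ j ∈ s, x j := by
    simp only [Finset.mul_sum, ← Finset.sum_add_distrib]
    exact Finset.sum_congr rfl fun j _ ↦ by ring
  have hsq_nonneg : 0 ≤ ∑ j ∈ s, x j ^ 2 := Finset.sum_nonneg fun j _ ↦ sq_nonneg (x j)
  have hsq_le := Finset.sum_sq_le_sq_sum_of_nonneg hx
  constructor <;> nlinarith

section Increments

variable {Ω : Type*} [MeasurableSpace Ω] {P : Measure Ω} [IsProbabilityMeasure P]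

lemma integral_sum_sq_increments_sub_sq_mem_Icc {a β σ T : ℝ} (ha : 0 < a) (hβ : 0 < β)
    {Y : ℝ → Ω → ℝ} (hYmeas : ∀ u, Measurable (Y u))
    (hYlaw : ∀ u v : ℝ, 0 ≤ u → u < v → v ≤ T →
      P.map (fun ω ↦ Y v ω - Y u ω) = centeredGammaGH (a * (v - u)) β σ)
    {n : ℕ} {u : ℕ → ℝ} (hu0 : u 0 = 0) (hunT : u n = T) (hmono : ∀ j < n, u j < u (j + 1))
    (hindep : iIndepFun (fun j : Fin n ↦ fun ω ↦ Y (u (j + 1)) ω - Y (u j) ω) P) (c : ℝ) :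
    ∫ ω, (∑ j ∈ Finset.range n, (Y (u (j + 1)) ω - Y (u j) ω) ^ 2 - c) ^ 2 ∂P ∈
      Set.Icc (3 * a * σ ^ 4 * T / β ^ 2)
        (σ ^ 4 / β ^ 2 * (a * T * (2 * (a * T) + 3)) + (σ ^ 2 / β * (a * T) - c) ^ 2) := by
  have hmon : MonotoneOn u (Set.Iic n) :=
    monotoneOn_of_le_succ Set.ordConnected_Iic fun j _ _ hj ↦
      (hmono j (by simpa using hj)).le
  have hlaw (j : Fin n) : P.map (fun ω ↦ Y (u (j + 1)) ω - Y (u j) ω) =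
      centeredGammaGH (a * (u (j + 1) - u j)) β σ :=
    hYlaw _ _ (hu0 ▸ hmon (Set.mem_Iic.2 n.zero_le) (Set.mem_Iic.2 j.2.le) j.1.zero_le)
      (hmono j j.2) (hunT ▸ hmon (Set.mem_Iic.2 j.2) (Set.mem_Iic.2 le_rfl) j.2)
  have htel : ∑ j ∈ Finset.range n, a * (u (j + 1) - u j) = a * T := by
    rw [← Finset.mul_sum, Finset.sum_range_sub, hunT, hu0, sub_zero]
  simp only [Finset.sum_range fun j ↦ a * (u (j + 1) - u j)] at htel
  simp_rw [Finset.sum_range fun j ↦ (Y (u (j + 1)) _ - Y (u j) _) ^ 2]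
  rw [integral_sum_sq_sub_sq_of_iIndepFun (X := fun j : Fin n ↦ fun ω ↦ Y (u (j + 1)) ω - Y (u j) ω)
    (fun j ↦ (hYmeas _).sub (hYmeas _))
    hindep (fun j ↦ mul_pos ha (sub_pos.2 (hmono j j.2))) hβ hlaw, htel]
  obtain ⟨hlow, hupp⟩ := sum_mul_two_mul_add_three_mem_Icc Finset.univ
    (x := fun j : Fin n ↦ a * (u (j + 1) - u j)) fun j _ ↦ (mul_pos ha (sub_pos.2 (hmono j j.2))).le
  rw [htel] at hlow hupp
  constructor
  · calc 3 * a * σ ^ 4 * T / β ^ 2 = σ ^ 4 / β ^ 2 * (3 * (a * T)) := by ring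
      _ ≤ _ := by gcongr
      _ ≤ _ := le_add_of_nonneg_right (sq_nonneg _)
  · gcongr

end Increments

theorem quadratic_variation_not_L2_convergent_gamma_gh_general
    {Ω : Type*} [MeasurableSpace Ω] (P : Measure Ω) [IsProbabilityMeasure P]
    (a β σ T : ℝ) (ha : 0 < a) (hβ : 0 < β) (hσ : 0 < σ) (hT : 0 < T)
    -- the process on `[0, T]`
    (Y : ℝ → Ω → ℝ) (hYmeas : ∀ u, Measurable (Y u))
    -- independent increments
    (hYindep : ∀ (m : ℕ) (u : ℕ → ℝ), u 0 = 0 → (∀ i < m, u i < u (i + 1)) →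
      u m ≤ T →
      iIndepFun
        (fun j : Fin m => fun ω => Y (u ((j : ℕ) + 1)) ω - Y (u (j : ℕ)) ω) P)
    -- increment laws
    (hYlaw : ∀ u v : ℝ, 0 ≤ u → u < v → v ≤ T →
      Measure.map (fun ω => Y v ω - Y u ω) P = centeredGammaGH (a * (v - u)) β σ)
    -- the partitions `π_k = (0 = t k 0 < t k 1 < ⋯ < t k (ℓ k) = T)`
    (ℓ : ℕ → ℕ) (t : ℕ → ℕ → ℝ)
    (ht0 : ∀ k, t k 0 = 0) (htT : ∀ k, t k (ℓ k) = T)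
    (hmono : ∀ k, ∀ j < ℓ k, t k j < t k (j + 1))
    -- the quadratic variations
    (VQ : ℕ → Ω → ℝ)
    (hVQ : ∀ k ω,
      VQ k ω = ∑ j ∈ Finset.range (ℓ k), (Y (t k (j + 1)) ω - Y (t k j) ω) ^ 2) :
    (∀ c : ℝ,
        3 * a * σ ^ 4 * T / β ^ 2 ≤ liminf (fun k => ∫ ω, (VQ k ω - c) ^ 2 ∂P) atTop) ∧
      0 < 3 * a * σ ^ 4 * T / β ^ 2 ∧
      ¬ ∃ c : ℝ, Tendsto (fun k => ∫ ω, (VQ k ω - c) ^ 2 ∂P) atTop (nhds 0) := by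
  have hpos : 0 < 3 * a * σ ^ 4 * T / β ^ 2 := by positivity
  -- The upper bound is needed because `liminf` of a real sequence unbounded above is junk.
  have bounds (c : ℝ) (k : ℕ) : ∫ ω, (VQ k ω - c) ^ 2 ∂P ∈ Set.Icc (3 * a * σ ^ 4 * T / β ^ 2)
      (σ ^ 4 / β ^ 2 * (a * T * (2 * (a * T) + 3)) + (σ ^ 2 / β * (a * T) - c) ^ 2) := by
    simpa only [← hVQ] using integral_sum_sq_increments_sub_sq_mem_Icc ha hβ hYmeas hYlaw
      (ht0 k) (htT k) (hmono k) (hYindep _ _ (ht0 k) (hmono k) (htT k).le) c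
  refine ⟨fun c ↦ ?_, hpos, fun ⟨c, hc⟩ ↦ hpos.not_ge (ge_of_tendsto' hc fun k ↦ (bounds c k).1)⟩
  exact le_liminf_of_le (isCoboundedUnder_ge_of_le atTop fun k ↦ (bounds c k).2)
    (Eventually.of_forall fun k ↦ (bounds c k).1)

/-- **The quadratic variation of the centered gamma-gh Lévy process does not converge
in `L²` to a constant.** Let `Y` be a process on `[0, T]` with `Y 0 = 0` a.s.,
independent increments, and increments `Y t − Y s ∼ centeredGammaGH (a (t − s)) β σ`.
Along partitions `π_k` of `[0, T]` with mesh tending to `0`, let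
`V_Q(T, π_k) = Σ_j (Y(t_{j+1}) − Y(t_j))²`. Then for every constant `c ∈ ℝ`,
`liminf_k E[(V_Q(T, π_k) − c)²] ≥ 3 a σ⁴ T / β² > 0`; in particular `V_Q(T, π_k)` does
not converge in `L²` to any constant. -/
theorem quadratic_variation_not_L2_convergent_gamma_gh
    {Ω : Type*} [MeasurableSpace Ω] (P : Measure Ω) [IsProbabilityMeasure P]
    (a β σ T : ℝ) (ha : 0 < a) (hβ : 0 < β) (hσ : 0 < σ) (hT : 0 < T)
    -- the process on `[0, T]`
    (Y : ℝ → Ω → ℝ) (hYmeas : ∀ u, Measurable (Y u))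
    (hY0 : ∀ᵐ ω ∂P, Y 0 ω = 0)
    -- independent increments
    (hYindep : ∀ (m : ℕ) (u : ℕ → ℝ), u 0 = 0 → (∀ i < m, u i < u (i + 1)) →
      u m ≤ T →
      iIndepFun
        (fun j : Fin m => fun ω => Y (u ((j : ℕ) + 1)) ω - Y (u (j : ℕ)) ω) P)
    -- increment laws
    (hYlaw : ∀ u v : ℝ, 0 ≤ u → u < v → v ≤ T →
      Measure.map (fun ω => Y v ω - Y u ω) P = centeredGammaGH (a * (v - u)) β σ)
    -- the partitions `π_k = (0 = t k 0 < t k 1 < ⋯ < t k (ℓ k) = T)`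
    (ℓ : ℕ → ℕ) (hℓ : ∀ k, 0 < ℓ k) (t : ℕ → ℕ → ℝ)
    (ht0 : ∀ k, t k 0 = 0) (htT : ∀ k, t k (ℓ k) = T)
    (hmono : ∀ k, ∀ j < ℓ k, t k j < t k (j + 1))
    -- the mesh `m(π_k)` tends to `0`
    (hmesh : Tendsto
      (fun k => (Finset.range (ℓ k)).sup'
        (Finset.nonempty_range_iff.mpr (hℓ k).ne') (fun j => t k (j + 1) - t k j))
      atTop (nhds 0))
    -- the quadratic variations
    (VQ : ℕ → Ω → ℝ)
    (hVQ : ∀ k ω,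
      VQ k ω = ∑ j ∈ Finset.range (ℓ k), (Y (t k (j + 1)) ω - Y (t k j) ω) ^ 2) :
    (∀ c : ℝ,
        3 * a * σ ^ 4 * T / β ^ 2 ≤ liminf (fun k => ∫ ω, (VQ k ω - c) ^ 2 ∂P) atTop) ∧
      0 < 3 * a * σ ^ 4 * T / β ^ 2 ∧
      ¬ ∃ c : ℝ, Tendsto (fun k => ∫ ω, (VQ k ω - c) ^ 2 ∂P) atTop (nhds 0) :=
  quadratic_variation_not_L2_convergent_gamma_gh_general P a β σ T ha hβ hσ hT Y hYmeas hYindep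
    hYlaw ℓ t ht0 htT hmono VQ hVQ
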